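/- Let u solve the Cauchy problem for the shifted wave equation on T_q with data f, g : T_q → ℂ supported in the ball B(x_0,N) = {y : d(y,x_0) ≤ N}. Then there exists a constant C ≥ 0 such that |u(x,n)| ≤ C·q^(−|n|/2) for all x ∈ T_q and n ∈ ℤ. -/

import Mathlib

open scoped BigOperators

/-- A homogeneous tree of degree `q + 1`: a connected acyclic simple graph in which
every vertex has exactly `q + 1` neighbours. Spheres for the graph distance are finite. -/
structure HomTree (q : ℕ) where
  V : Type
  G : SimpleGraph V
  conn : G.Connected
  acyclic : G.IsAcyclic
  sphereFin : ∀ (x : V) (n : ℕ), {y : V | G.dist x y = n}.Finite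
  nbrFin : ∀ x : V, {y : V | G.Adj x y}.Finite
  degree : ∀ x : V, (nbrFin x).toFinset.card = q + 1

namespace HomTree

variable {q : ℕ}

/-- The sphere `S(x,n)` as a finite set. -/
noncomputable def sphere (T : HomTree q) (x : T.V) (n : ℕ) : Finset T.V :=
  (T.sphereFin x n).toFinset

/-- The volume `δ(n)` of spheres. -/
def delta (q n : ℕ) : ℕ := if n = 0 then 1 else (q + 1) * q ^ (n - 1)

/-- The combinatorial Laplacian on the tree. -/
noncomputable def lap (T : HomTree q) (f : T.V → ℂ) (x : T.V) : ℂ :=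
  f x - (1 / ((q : ℂ) + 1)) * ∑ y ∈ T.sphere x 1, f y

/-- Spherical means. -/
noncomputable def sphMean (T : HomTree q) (f : T.V → ℂ) (x : T.V) (n : ℕ) : ℂ :=
  (1 / (delta q n : ℂ)) * ∑ y ∈ T.sphere x n, f y

/-- Real powers of `q`, as a complex number. -/
noncomputable def qpow (q : ℕ) (x : ℝ) : ℂ := (((q : ℝ) ^ x : ℝ) : ℂ)

/-- `γ = 2 / (q^{1/2} + q^{-1/2})`. -/
noncomputable def gam (q : ℕ) : ℝ := 2 / ((q : ℝ) ^ ((1 : ℝ)/2) + (q : ℝ) ^ (-(1 : ℝ)/2))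

/-- The combinatorial Laplacian on `ℤ`. -/
noncomputable def lapZ (φ : ℤ → ℂ) (m : ℤ) : ℂ := φ m - (φ (m + 1) + φ (m - 1)) / 2

lemma ball_finite (T : HomTree q) (x : T.V) (n : ℕ) :
    {y : T.V | T.G.dist x y ≤ n}.Finite := by
  have h : {y : T.V | T.G.dist x y ≤ n} ⊆ ⋃ m ∈ Set.Iic n, {y : T.V | T.G.dist x y = m} := by
    intro y hy
    exact Set.mem_biUnion hy rfl
  exact (((Set.finite_Iic n)).biUnion fun m _ => T.sphereFin x m).subset h

/-- The ball `B(x,n)` as a finite set. -/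
noncomputable def ball (T : HomTree q) (x : T.V) (n : ℕ) : Finset T.V :=
  (T.ball_finite x n).toFinset

/-- The operator `M_n` (with `M_n = 0` for `n < 0`). -/
noncomputable def Mop (T : HomTree q) (n : ℤ) (f : T.V → ℂ) (x : T.V) : ℂ :=
  if 0 ≤ n then
    qpow q (-(n : ℝ) / 2) *
      ∑ y ∈ (T.ball x n.toNat).filter (fun y => (n.toNat - T.G.dist x y) % 2 = 0), f y
  else 0

/-- The operator `C_n = (M_{|n|} - M_{|n|-2})/2`, `C_0 = Id`. -/
noncomputable def Cop (T : HomTree q) (n : ℤ) (f : T.V → ℂ) (x : T.V) : ℂ :=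
  if n = 0 then f x else (Mop T |n| f x - Mop T (|n| - 2) f x) / 2

/-- The operator `S_n = sign(n) · M_{|n|-1}`. -/
noncomputable def Sop (T : HomTree q) (n : ℤ) (g : T.V → ℂ) (x : T.V) : ℂ :=
  (n.sign : ℂ) * Mop T (|n| - 1) g x

/-- `u` solves the shifted wave equation on the tree. -/
def IsWaveSol (T : HomTree q) (u : T.V → ℤ → ℂ) : Prop :=
  ∀ (x : T.V) (n : ℤ),
    u x (n + 1) + u x (n - 1) = qpow q (-(1 : ℝ)/2) * ∑ y ∈ T.sphere x 1, u y n

/-- `u` solves the Cauchy problem for the shifted wave equation with data `f`, `g`. -/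
def IsCauchy (T : HomTree q) (f g : T.V → ℂ) (u : T.V → ℤ → ℂ) : Prop :=
  IsWaveSol T u ∧ (∀ x, u x 0 = f x) ∧ ∀ x, (u x 1 - u x (-1)) / 2 = g x

/-- Kinetic energy. -/
noncomputable def kinetic (T : HomTree q) (u : T.V → ℤ → ℂ) (n : ℤ) : ℝ :=
  (1/2) * ∑' x : T.V, ‖(u x (n + 1) - u x (n - 1)) / 2‖ ^ 2

/-- Potential energy. -/
noncomputable def potential (T : HomTree q) (u : T.V → ℤ → ℂ) (n : ℤ) : ℝ :=
  (1 / (4 * (q : ℝ))) * ∑' p : T.V × T.V,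
      (if T.G.dist p.1 p.2 = 2 then ‖(u p.1 n - u p.2 n) / 2‖ ^ 2 else 0)
    - (((q : ℝ) - 1) ^ 2 / (8 * (q : ℝ))) * ∑' x : T.V, ‖u x n‖ ^ 2

/-- The two-step Laplacian. -/
noncomputable def lap2 (T : HomTree q) (f : T.V → ℂ) (x : T.V) : ℂ :=
  f x - (1 / ((q : ℂ) * ((q : ℂ) + 1))) * ∑ y ∈ T.sphere x 2, f y

end HomTree

/-!
Multiplying by `q ^ (n / 2)` turns the wave equation into
`v (n + 1) + q v (n - 1) = ∑_{y ~ x} v (y, n)`. On a homogeneous tree the kernel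
`K_n (x, y) = 1[d(x, y) ≤ n, d(x, y) ≡ n mod 2]` (with `K_n = 0` for `n < 0`) obeys the same
recursion in `x`, because seen from `y ≠ x` one neighbour of `x` is one step closer and the
other `q` are one step farther. Hence `v n = K_n v 0 - q K_{n-1} v (-1)`. The data `v 0` and
`v (-1)` vanish outside a fixed ball and `K_n` is `0` or `1`, so `v` is bounded uniformly in
`n ≥ 0`; negative times follow from the symmetry `n ↦ -n` of the equation.
-/

lemma Real.rpow_neg_natCast_div_two {x : ℝ} (hx : 0 ≤ x) (n : ℕ) :
    x ^ (-(n : ℝ) / 2) = (√x ^ n)⁻¹ := by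
  rw [Real.sqrt_eq_rpow, ← Real.rpow_natCast, ← Real.rpow_mul hx, ← Real.rpow_neg hx]
  ring_nf

namespace SimpleGraph

variable {V : Type*} {G : SimpleGraph V}

lemma Reachable.exists_adj_dist_add_one_eq {x y : V} (h : G.Reachable x y) (hne : x ≠ y) :
    ∃ z, G.Adj x z ∧ G.dist z y + 1 = G.dist x y := by
  obtain ⟨p, -, hp⟩ := h.exists_path_of_dist
  cases p with
  | nil => exact absurd rfl hne
  | cons hxz w =>
    refine ⟨_, hxz, le_antisymm ?_ ?_⟩
    · rw [← hp, Walk.length_cons]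
      exact Nat.succ_le_succ (dist_le w)
    · simpa [dist_eq_one_iff_adj.mpr hxz, add_comm] using
        (hxz.reachable.symm.trans h).dist_triangle_right x

/-- Both `x z … y` and `x z' … y` are geodesics, hence the unique path from `x` to `y`. -/
lemma IsAcyclic.eq_of_adj_of_dist_add_one_eq (hG : G.IsAcyclic) {x y z z' : V}
    (hz : G.Adj x z) (hz' : G.Adj x z') (hd : G.dist z y + 1 = G.dist x y)
    (hd' : G.dist z' y + 1 = G.dist x y) : z = z' := by
  have hxy : G.Reachable x y := Reachable.of_dist_ne_zero (by omega)
  obtain ⟨w, hw⟩ := (hz.reachable.symm.trans hxy).exists_walk_length_eq_dist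
  obtain ⟨w', hw'⟩ := (hz'.reachable.symm.trans hxy).exists_walk_length_eq_dist
  have hp := (Walk.cons hz w).isPath_of_length_eq_dist (by simp [hw, hd])
  have hp' := (Walk.cons hz' w').isPath_of_length_eq_dist (by simp [hw', hd'])
  simpa using congrArg (fun p : G.Path x y => p.val.getVert 1)
    ((hG.subsingleton_path x y).elim ⟨_, hp⟩ ⟨_, hp'⟩)

end SimpleGraph

namespace HomTree

open Finset

variable {q : ℕ} (T : HomTree q)

lemma mem_sphere_one {x z : T.V} : z ∈ T.sphere x 1 ↔ T.G.Adj x z := by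
  simp [sphere]

lemma card_sphere_one (x : T.V) : #(T.sphere x 1) = q + 1 := by
  rw [← T.degree x]
  congr 1
  ext z
  simp [mem_sphere_one]

lemma mem_ball {x y : T.V} {n : ℕ} : y ∈ T.ball x n ↔ T.G.dist x y ≤ n := by
  simp [ball]

lemma sum_sphere_one_dist_of_ne {x y : T.V} (hne : x ≠ y) (F : ℕ → ℂ) :
    ∑ z ∈ T.sphere x 1, F (T.G.dist z y) = F (T.G.dist x y - 1) + q * F (T.G.dist x y + 1) := by
  classical
  obtain ⟨z₀, hz₀, hd₀⟩ := (T.conn.preconnected x y).exists_adj_dist_add_one_eq hne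
  have hmem : z₀ ∈ T.sphere x 1 := (T.mem_sphere_one).mpr hz₀
  have hfar : ∀ z ∈ (T.sphere x 1).erase z₀, F (T.G.dist z y) = F (T.G.dist x y + 1) := by
    intro z hz
    obtain ⟨hne₀, hz⟩ := mem_erase.mp hz
    have hxz := (T.mem_sphere_one).mp hz
    have hstep :=
      T.acyclic.dist_eq_dist_add_one_of_adj_of_reachable y hxz (T.conn.preconnected y x)
    have hnear : T.G.dist z y + 1 ≠ T.G.dist x y := fun h =>
      hne₀ (T.acyclic.eq_of_adj_of_dist_add_one_eq hxz hz₀ h hd₀)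
    rw [SimpleGraph.dist_comm (u := y), SimpleGraph.dist_comm (u := y)] at hstep
    congr 1
    omega
  rw [← add_sum_erase _ _ hmem, sum_congr rfl hfar, sum_const, card_erase_of_mem hmem,
    card_sphere_one, show T.G.dist z₀ y = T.G.dist x y - 1 by omega, nsmul_eq_mul]
  push_cast
  ring

lemma sum_sphere_one_dist_self (x : T.V) (F : ℕ → ℂ) :
    ∑ z ∈ T.sphere x 1, F (T.G.dist z x) = (q + 1) * F 1 := by
  rw [sum_congr rfl fun z hz => by
      rw [SimpleGraph.dist_comm, SimpleGraph.dist_eq_one_iff_adj.mpr ((T.mem_sphere_one).mp hz)],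
    sum_const, card_sphere_one, nsmul_eq_mul]
  push_cast
  ring

def parityKernel (n : ℤ) (d : ℕ) : ℂ :=
  if (d : ℤ) ≤ n ∧ (n - d) % 2 = 0 then 1 else 0

lemma sum_sphere_one_parityKernel {n : ℤ} (hn : 0 ≤ n) (x y : T.V) :
    ∑ z ∈ T.sphere x 1, parityKernel n (T.G.dist z y)
      = parityKernel (n + 1) (T.G.dist x y) + q * parityKernel (n - 1) (T.G.dist x y) := by
  by_cases hxy : x = y
  · subst hxy
    rw [sum_sphere_one_dist_self, SimpleGraph.dist_self]
    unfold parityKernel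
    split_ifs <;> first | omega | ring
  · have hd := (T.conn.preconnected x y).pos_dist_of_ne hxy
    rw [sum_sphere_one_dist_of_ne _ hxy]
    unfold parityKernel
    split_ifs <;> first | omega | ring

/-- For `h` supported in `S` and `n ≥ 0` this is `q ^ (n / 2) * Mop T n h x`. -/
noncomputable def parityBallSum (S : Finset T.V) (n : ℤ) (h : T.V → ℂ) (x : T.V) : ℂ :=
  ∑ y ∈ S, parityKernel n (T.G.dist x y) * h y

variable {T}

lemma sum_sphere_one_parityBallSum (S : Finset T.V) {n : ℤ} (hn : 0 ≤ n) (h : T.V → ℂ)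
    (x : T.V) :
    ∑ z ∈ T.sphere x 1, T.parityBallSum S n h z
      = T.parityBallSum S (n + 1) h x + q * T.parityBallSum S (n - 1) h x := by
  simp only [parityBallSum, mul_sum]
  rw [sum_comm, ← sum_add_distrib]
  refine sum_congr rfl fun y _ => ?_
  rw [← sum_mul, sum_sphere_one_parityKernel T hn]
  ring

lemma parityBallSum_zero {S : Finset T.V} {h : T.V → ℂ} (hS : ∀ y ∉ S, h y = 0) (x : T.V) :
    T.parityBallSum S 0 h x = h x := by
  rw [parityBallSum, sum_eq_single x]
  · simp [parityKernel]
  · intro y _ hyx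
    simp [parityKernel, (T.conn.preconnected x y).dist_eq_zero_iff, Ne.symm hyx]
  · intro hx
    simp [hS x hx]

lemma parityBallSum_of_neg (S : Finset T.V) {n : ℤ} (hn : n < 0) (h : T.V → ℂ) (x : T.V) :
    T.parityBallSum S n h x = 0 :=
  sum_eq_zero fun y _ => by simp [parityKernel, show ¬ ((T.G.dist x y : ℤ) ≤ n) by omega]

lemma norm_parityBallSum_le (S : Finset T.V) (n : ℤ) (h : T.V → ℂ) (x : T.V) :
    ‖T.parityBallSum S n h x‖ ≤ ∑ y ∈ S, ‖h y‖ :=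
  (norm_sum_le _ _).trans <| sum_le_sum fun y _ => by
    rw [norm_mul]
    unfold parityKernel
    split_ifs <;> simp

lemma eq_parityBallSum_of_recurrence {S : Finset T.V} {v : T.V → ℤ → ℂ}
    (hv : ∀ x (n : ℤ), 0 ≤ n → v x (n + 1) + q * v x (n - 1) = ∑ z ∈ T.sphere x 1, v z n)
    (h₀ : ∀ y ∉ S, v y 0 = 0) (hm : ∀ y ∉ S, v y (-1) = 0) (n : ℕ) (x : T.V) :
    v x n = T.parityBallSum S n (v · 0) x - q * T.parityBallSum S (n - 1) (v · (-1)) x := by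
  set P : ℤ → T.V → ℂ := fun n => T.parityBallSum S n (v · 0)
  set Q : ℤ → T.V → ℂ := fun n => T.parityBallSum S n (v · (-1))
  have hP : ∀ n : ℤ, 0 ≤ n → ∀ x,
      ∑ z ∈ T.sphere x 1, P n z = P (n + 1) x + q * P (n - 1) x :=
    fun n hn x => sum_sphere_one_parityBallSum S hn _ x
  have hQ : ∀ n : ℤ, 0 ≤ n → ∀ x,
      ∑ z ∈ T.sphere x 1, Q n z = Q (n + 1) x + q * Q (n - 1) x :=
    fun n hn x => sum_sphere_one_parityBallSum S hn _ x
  have hP₀ : ∀ x, P 0 x = v x 0 := parityBallSum_zero h₀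
  have hQ₀ : ∀ x, Q 0 x = v x (-1) := parityBallSum_zero hm
  have hPm : ∀ x, P (-1) x = 0 := parityBallSum_of_neg S (by norm_num) _
  have hQm : ∀ x, Q (-1) x = 0 := parityBallSum_of_neg S (by norm_num) _
  suffices ∀ k : ℕ, (∀ x, v x k = P k x - q * Q (k - 1) x) ∧
      (∀ x, v x (k + 1) = P (k + 1) x - q * Q k x) from (this n).1 x
  intro k
  induction k with
  | zero =>
    refine ⟨fun x => by simp [hP₀, hQm], fun x => ?_⟩
    have h₁ := hP 0 le_rfl x
    have hrec := hv x 0 le_rfl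
    simp only [Nat.cast_zero, zero_add, zero_sub, hPm, hP₀, mul_zero, add_zero] at h₁ hrec ⊢
    linear_combination hrec + h₁ + q * hQ₀ x
  | succ k ih =>
    refine ⟨by push_cast; simpa only [add_sub_cancel_right] using ih.2, fun x => ?_⟩
    have hsum : ∑ z ∈ T.sphere x 1, v z (k + 1)
        = ∑ z ∈ T.sphere x 1, (P (k + 1) z - q * Q k z) :=
      sum_congr rfl fun z _ => ih.2 z
    rw [sum_sub_distrib, ← mul_sum, hP (k + 1) (by positivity) x, hQ k (by positivity) x] at hsum
    have hrec := hv x (k + 1) (by positivity)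
    simp only [add_sub_cancel_right] at hrec hsum
    push_cast
    linear_combination hrec - q * ih.1 x + hsum

lemma qpow_neg_one_half (q : ℕ) : qpow q (-(1 : ℝ) / 2) = ((√(q : ℝ))⁻¹ : ℝ) := by
  rw [qpow, Real.sqrt_eq_rpow, ← Real.rpow_neg (Nat.cast_nonneg q), neg_div]

namespace IsWaveSol

variable {u : T.V → ℤ → ℂ}

lemma comp_neg (hu : T.IsWaveSol u) : T.IsWaveSol fun x n => u x (-n) := fun x n => by
  simpa [neg_add, add_comm, sub_eq_add_neg] using hu x (-n)

lemma sqrt_zpow_mul (hq : 0 < q) (hu : T.IsWaveSol u) (x : T.V) (n : ℤ) :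
    (√(q : ℝ) : ℂ) ^ (n + 1) * u x (n + 1) + q * ((√(q : ℝ) : ℂ) ^ (n - 1) * u x (n - 1))
      = ∑ z ∈ T.sphere x 1, (√(q : ℝ) : ℂ) ^ n * u z n := by
  have hwave := hu x n
  rw [qpow_neg_one_half, Complex.ofReal_inv] at hwave
  set s : ℂ := (√(q : ℝ) : ℂ)
  have hs : s ≠ 0 := by simp [s, hq.ne']
  have hsq : s * s = q := by
    rw [← Complex.ofReal_mul, Real.mul_self_sqrt (Nat.cast_nonneg q)]
    norm_cast
  rw [← mul_sum, zpow_add₀ hs, zpow_sub₀ hs, zpow_one, ← hsq]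
  linear_combination s ^ n * s * hwave
    + (s ^ n * s * u x (n - 1) + s ^ n * ∑ z ∈ T.sphere x 1, u z n) * mul_inv_cancel₀ hs

theorem norm_le_of_support (hq : 0 < q) (hu : T.IsWaveSol u) {S : Finset T.V}
    (h₀ : ∀ y ∉ S, u y 0 = 0) (hm : ∀ y ∉ S, u y (-1) = 0) (n : ℕ) (x : T.V) :
    ‖u x n‖
      ≤ (∑ y ∈ S, ‖u y 0‖ + √(q : ℝ) * ∑ y ∈ S, ‖u y (-1)‖) * (q : ℝ) ^ (-(n : ℝ) / 2) := by
  set s : ℝ := √(q : ℝ)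
  have hs : 0 < s := Real.sqrt_pos.mpr (by exact_mod_cast hq)
  have hsq : (q : ℝ) * s⁻¹ = s := by
    rw [mul_inv_eq_iff_eq_mul₀ hs.ne', Real.mul_self_sqrt (Nat.cast_nonneg q)]
  set v : T.V → ℤ → ℂ := fun x n => (s : ℂ) ^ n * u x n
  have hv := eq_parityBallSum_of_recurrence (S := S) (v := v)
    (fun x n _ => hu.sqrt_zpow_mul hq x n)
    (fun y hy => by simp [v, h₀ y hy]) (fun y hy => by simp [v, hm y hy]) n x
  have hnorm : ‖v x n‖ ≤ ∑ y ∈ S, ‖u y 0‖ + s * ∑ y ∈ S, ‖u y (-1)‖ := by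
    rw [hv]
    refine (norm_sub_le _ _).trans (add_le_add ?_ ?_)
    · simpa [v] using norm_parityBallSum_le S (n : ℤ) (v · 0) x
    · rw [norm_mul, Complex.norm_natCast, ← hsq, mul_assoc, mul_sum]
      gcongr
      simpa [v, norm_mul, mul_sum, abs_of_pos hs] using
        norm_parityBallSum_le S ((n : ℤ) - 1) (v · (-1)) x
  rw [Real.rpow_neg_natCast_div_two (Nat.cast_nonneg q), ← div_eq_mul_inv, le_div_iff₀ (pow_pos hs n), mul_comm]
  simpa [v, norm_mul, abs_of_pos hs] using hnorm

end IsWaveSol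

lemma sum_sphere_one_eq_zero_of_support {h : T.V → ℂ} {x₀ : T.V} {N : ℕ}
    (hh : ∀ y, N < T.G.dist y x₀ → h y = 0) {x : T.V} (hx : N + 1 < T.G.dist x x₀) :
    ∑ z ∈ T.sphere x 1, h z = 0 :=
  sum_eq_zero fun z hz => hh z <| by
    have := T.conn.dist_triangle (u := x) (v := z) (w := x₀)
    rw [SimpleGraph.dist_eq_one_iff_adj.mpr ((T.mem_sphere_one).mp hz)] at this
    omega

lemma IsCauchy.eq_zero_of_support {f g : T.V → ℂ} {u : T.V → ℤ → ℂ} (hu : T.IsCauchy f g u)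
    {x₀ : T.V} {N : ℕ} (hf : ∀ y, N < T.G.dist y x₀ → f y = 0)
    (hg : ∀ y, N < T.G.dist y x₀ → g y = 0) {y : T.V} (hy : N + 1 < T.G.dist y x₀) :
    u y 0 = 0 ∧ u y 1 = 0 ∧ u y (-1) = 0 := by
  obtain ⟨hwave, hu₀, hu₁⟩ := hu
  have hsum := hwave y 0
  rw [sum_congr rfl fun z _ => hu₀ z, sum_sphere_one_eq_zero_of_support hf hy,
    mul_zero, zero_add, zero_sub] at hsum
  have hdiff := hu₁ y
  rw [hg y (by omega)] at hdiff
  exact ⟨by rw [hu₀, hf y (by omega)], by linear_combination hsum / 2 + hdiff,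
    by linear_combination hsum / 2 - hdiff⟩

end HomTree

open HomTree in
/-- decay of solutions with compactly supported data. -/
theorem stmt11 {q : ℕ} (hq : 2 ≤ q) (T : HomTree q) (f g : T.V → ℂ)
    (x₀ : T.V) (N : ℕ)
    (hf : ∀ y : T.V, N < T.G.dist y x₀ → f y = 0)
    (hg : ∀ y : T.V, N < T.G.dist y x₀ → g y = 0)
    (u : T.V → ℤ → ℂ) (hu : HomTree.IsCauchy T f g u) :
    ∃ C : ℝ, 0 ≤ C ∧ ∀ (x : T.V) (n : ℤ),
      ‖u x n‖ ≤ C * (q : ℝ) ^ (-(n.natAbs : ℝ) / 2) := by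
  have hq₀ : 0 < q := by omega
  set S := T.ball x₀ (N + 1)
  have hout : ∀ y ∉ S, u y 0 = 0 ∧ u y 1 = 0 ∧ u y (-1) = 0 := fun y hy =>
    hu.eq_zero_of_support hf hg (by rw [mem_ball, SimpleGraph.dist_comm] at hy; omega)
  refine ⟨∑ y ∈ S, ‖u y 0‖ + √(q : ℝ) * (∑ y ∈ S, ‖u y (-1)‖ + ∑ y ∈ S, ‖u y 1‖), by positivity,
    fun x n => ?_⟩
  obtain ⟨k, rfl | rfl⟩ := Int.eq_nat_or_neg n <;>
    simp only [Int.natAbs_neg, Int.natAbs_natCast]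
  · refine (hu.1.norm_le_of_support hq₀ (fun y hy => (hout y hy).1)
      (fun y hy => (hout y hy).2.2) k x).trans ?_
    gcongr
    exact le_add_of_nonneg_right (by positivity)
  · have hback := hu.1.comp_neg.norm_le_of_support hq₀ (fun y hy => by simpa using (hout y hy).1)
      (fun y hy => by simpa using (hout y hy).2.1) k x
    simp only [neg_zero, neg_neg] at hback
    refine hback.trans ?_
    gcongr
    exact le_add_of_nonneg_left (by positivity)
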